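/- arXiv:0912.1022 — 2 statements merged into one kernel-verified Lean document; each statement's English description precedes it below -/
import Mathlib

section
/- Let s : [0, 1/2) → Z be a step function in the admissible class S (finitely many discontinuities, continuous at 0, value at each point equal to average of one-sided limits, integer half-jumps J_s, discontinuities partitioned into finite sets T_{s,δ} on each of which all half-jumps are congruent mod 2). Define r_δ(s) = max_{t ∈ T_{s,δ}} |s(t)| + max_{t ∈ T_{s,δ}} |J_s(t)| and r(s) = max over δ of r_δ(s) and |s(0)|. Then r(s) ≡ s(0) (mod 2). -/
open Finset
open scoped Classical

/-- Let `s` be an admissible step function on `[0,1/2)` (modelled by its value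
`s₀ = s(0)`, its finite set `D ⊂ (0,1/2)` of discontinuities and integer
half-jumps `J`, so that `s(t) = s₀ + 2·Σ_{α ∈ D, α < t} J(α) + Σ_{α ∈ D, α = t} J(α)`),
whose discontinuities are partitioned into classes `T_{s,δ}` (fibers of a map
`c`, indexed by the symmetric irreducible polynomials `δ`) on each of which all
half-jumps are congruent mod 2.  With
`r_δ(s) = max_{t ∈ T_{s,δ}} |s(t)| + max_{t ∈ T_{s,δ}} |J_s(t)|` and
`r(s) = max(|s(0)|, max_δ r_δ(s))`, one has `r(s) ≡ s(0) (mod 2)`. -/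
theorem stmt12 {ι : Type*} (s : ℝ → ℤ) (s₀ : ℤ) (D : Finset ℝ) (J : ℝ → ℤ)
    (c : ℝ → ι)
    (hD : ∀ α ∈ D, α ∈ Set.Ioo (0 : ℝ) (1 / 2))
    (hJ : ∀ α ∈ D, J α ≠ 0)
    (hs : ∀ t : ℝ, s t =
      s₀ + 2 * ∑ α ∈ D.filter (fun α => α < t), J α
        + ∑ α ∈ D.filter (fun α => α = t), J α)
    (hpar : ∀ α ∈ D, ∀ β ∈ D, c α = c β → J α ≡ J β [ZMOD 2]) :
    ((max (s 0).natAbs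
        ((D.image c).sup fun i =>
          ((D.filter fun α => c α = i).sup fun α => (s α).natAbs) +
            ((D.filter fun α => c α = i).sup fun α => (J α).natAbs)) : ℕ) : ℤ)
      ≡ s 0 [ZMOD 2] := by
  -- s 0 = s₀
  have hs0 : s 0 = s₀ := by
    have h := hs 0
    rw [Finset.filter_false_of_mem, Finset.filter_false_of_mem] at h
    · simpa using h
    · intro α hα
      exact ne_of_gt (hD α hα).1
    · intro α hα
      exact not_lt.2 (le_of_lt (hD α hα).1)
  -- parity of s α for α ∈ D
  have hsα : ∀ α ∈ D, s α ≡ s₀ + J α [ZMOD 2] := by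
    intro α hα
    have h := hs α
    have hfil : D.filter (fun β => β = α) = {α} := by
      ext β
      simp only [Finset.mem_filter, Finset.mem_singleton]
      constructor
      · rintro ⟨_, h⟩; exact h
      · rintro rfl; exact ⟨hα, rfl⟩
    rw [hfil, Finset.sum_singleton] at h
    rw [h]
    simp only [Int.ModEq]
    omega
  -- auxiliary: parity of a sup over a nonempty finset
  have sup_par : ∀ (F : Finset ℝ) (f : ℝ → ℕ) (e : ℤ), F.Nonempty →
      (∀ x ∈ F, (f x : ℤ) ≡ e [ZMOD 2]) → (((F.sup f : ℕ) : ℤ) ≡ e [ZMOD 2]) := by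
    intro F f e hF h
    obtain ⟨x, hx, hsup⟩ := F.exists_mem_eq_sup hF f
    rw [hsup]
    exact h x hx
  have habs : ∀ n : ℤ, (n.natAbs : ℤ) ≡ n [ZMOD 2] := by
    intro n
    rcases Int.natAbs_eq n with h | h
    · simp only [Int.ModEq]; omega
    · simp only [Int.ModEq]; omega
  -- parity of each class term
  have hclass : ∀ i ∈ D.image c,
      ((((D.filter fun α => c α = i).sup fun α => (s α).natAbs) +
        ((D.filter fun α => c α = i).sup fun α => (J α).natAbs) : ℕ) : ℤ) ≡ s₀ [ZMOD 2] := by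
    intro i hi
    obtain ⟨α₀, hα₀, hc₀⟩ := Finset.mem_image.1 hi
    have hne : (D.filter fun α => c α = i).Nonempty :=
      ⟨α₀, Finset.mem_filter.2 ⟨hα₀, hc₀⟩⟩
    have hA : (((D.filter fun α => c α = i).sup fun α => (s α).natAbs : ℕ) : ℤ)
        ≡ s₀ + J α₀ [ZMOD 2] := by
      apply sup_par _ _ _ hne
      intro α hα
      obtain ⟨hαD, hcα⟩ := Finset.mem_filter.1 hα
      have h1 := habs (s α)
      have h2 := hsα α hαD
      have h3 := hpar α hαD α₀ hα₀ (hcα.trans hc₀.symm)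
      simp only [Int.ModEq] at *
      omega
    have hB : (((D.filter fun α => c α = i).sup fun α => (J α).natAbs : ℕ) : ℤ)
        ≡ J α₀ [ZMOD 2] := by
      apply sup_par _ _ _ hne
      intro α hα
      obtain ⟨hαD, hcα⟩ := Finset.mem_filter.1 hα
      have h1 := habs (J α)
      have h3 := hpar α hαD α₀ hα₀ (hcα.trans hc₀.symm)
      simp only [Int.ModEq] at *
      omega
    push_cast
    simp only [Int.ModEq] at *
    omega
  -- parity of the outer sup (if the image is nonempty)
  have hM : ((s 0).natAbs : ℤ) ≡ s₀ [ZMOD 2] := by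
    have := habs (s 0)
    rw [hs0] at this ⊢
    exact this
  rcases (D.image c).eq_empty_or_nonempty with hemp | hne
  · rw [hemp]
    simpa [hs0] using hM
  · have hS : (((D.image c).sup fun i =>
        ((D.filter fun α => c α = i).sup fun α => (s α).natAbs) +
          ((D.filter fun α => c α = i).sup fun α => (J α).natAbs) : ℕ) : ℤ)
        ≡ s₀ [ZMOD 2] := by
      obtain ⟨j, hj, hsup⟩ := (D.image c).exists_mem_eq_sup hne (fun i =>
        ((D.filter fun α => c α = i).sup fun α => (s α).natAbs) +
          ((D.filter fun α => c α = i).sup fun α => (J α).natAbs))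
      rw [hsup]
      exact hclass j hj
    rcases max_choice (s 0).natAbs ((D.image c).sup fun i =>
        ((D.filter fun α => c α = i).sup fun α => (s α).natAbs) +
          ((D.filter fun α => c α = i).sup fun α => (J α).natAbs)) with h | h
    · rw [h]; exact habs (s 0)
    · rw [h, hs0]; exact hS
end

section
/- Define real numbers by S(x,y) = max(|2x + 2y|, |4x|) and R(x,y) = max(|x + y|, |3x + y|) + max(|x + y|, |x − y|) for x, y ∈ Q. Then: (a) R(x,y) ≥ S(x,y) for all x, y; (b) S(1,1) = 4 while R(1,1) = 6; (c) S(−1,3) = 4 while R(−1,3) = 6; (d) both S and R are norms on Q² (positive definite, absolutely homogeneous, subadditive). -/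
/-- The signature norm `S(x,y) = max(|2x+2y|, |4x|)` on the span of the Witt
classes `w₁, w₂`. -/
def Snorm (x y : ℚ) : ℚ := max |2 * x + 2 * y| |4 * x|

/-- The stable Witt rank norm
`R(x,y) = max(|x+y|, |3x+y|) + max(|x+y|, |x−y|)` on the span of `w₁, w₂`. -/
def Rnorm (x y : ℚ) : ℚ := max |x + y| |3 * x + y| + max |x + y| |x - y|

private lemma max_abs_add (a b c d : ℚ) :
    max |a + c| |b + d| ≤ max |a| |b| + max |c| |d| := by
  apply max_le
  · exact le_trans (abs_add_le a c) (add_le_add (le_max_left _ _) (le_max_left _ _))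
  · exact le_trans (abs_add_le b d) (add_le_add (le_max_right _ _) (le_max_right _ _))

/-- (a) `R ≥ S` everywhere; (b) `S(1,1) = 4` and `R(1,1) = 6`;
(c) `S(−1,3) = 4` and `R(−1,3) = 6`; (d) both `S` and `R` are norms on `ℚ²`. -/
theorem stmt15 :
    (∀ x y : ℚ, Snorm x y ≤ Rnorm x y) ∧
    (Snorm 1 1 = 4 ∧ Rnorm 1 1 = 6) ∧
    (Snorm (-1) 3 = 4 ∧ Rnorm (-1) 3 = 6) ∧
    (∀ N : ℚ → ℚ → ℚ, (N = Snorm ∨ N = Rnorm) →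
      (∀ x y : ℚ, 0 ≤ N x y) ∧
      (∀ x y : ℚ, N x y = 0 ↔ (x = 0 ∧ y = 0)) ∧
      (∀ q x y : ℚ, N (q * x) (q * y) = |q| * N x y) ∧
      (∀ x₁ y₁ x₂ y₂ : ℚ, N (x₁ + x₂) (y₁ + y₂) ≤ N x₁ y₁ + N x₂ y₂)) := by
  refine ⟨?_, ⟨by norm_num [Snorm], by norm_num [Rnorm]⟩,
    ⟨by norm_num [Snorm, abs], by norm_num [Rnorm, abs]⟩, ?_⟩
  · intro x y
    unfold Snorm Rnorm
    apply max_le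
    · have h : |2 * x + 2 * y| ≤ |x + y| + |x + y| := by
        rw [show (2:ℚ) * x + 2 * y = (x + y) + (x + y) by ring]
        exact abs_add_le _ _
      exact le_trans h (add_le_add (le_max_left _ _) (le_max_left _ _))
    · calc |4 * x| = |(3 * x + y) + (x - y)| := by ring_nf
        _ ≤ |3 * x + y| + |x - y| := abs_add_le _ _
        _ ≤ _ := add_le_add (le_max_right _ _) (le_max_right _ _)
  · rintro N (rfl | rfl)
    · refine ⟨?_, ?_, ?_, ?_⟩
      · intro x y; exact le_trans (abs_nonneg _) (le_max_left _ _)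
      · intro x y
        constructor
        · intro h
          have h1 : |2 * x + 2 * y| = 0 := le_antisymm (h ▸ le_max_left _ _) (abs_nonneg _)
          have h2 : |4 * x| = 0 := le_antisymm (h ▸ le_max_right _ _) (abs_nonneg _)
          rw [abs_eq_zero] at h1 h2
          constructor <;> linarith
        · rintro ⟨rfl, rfl⟩; norm_num [Snorm]
      · intro q x y
        unfold Snorm
        rw [show (2:ℚ) * (q * x) + 2 * (q * y) = q * (2 * x + 2 * y) by ring,
          show (4:ℚ) * (q * x) = q * (4 * x) by ring, abs_mul, abs_mul,
          ← mul_max_of_nonneg _ _ (abs_nonneg q)]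
      · intro x₁ y₁ x₂ y₂
        unfold Snorm
        have := max_abs_add (2 * x₁ + 2 * y₁) (4 * x₁) (2 * x₂ + 2 * y₂) (4 * x₂)
        calc max |2 * (x₁ + x₂) + 2 * (y₁ + y₂)| |4 * (x₁ + x₂)|
            = max |(2 * x₁ + 2 * y₁) + (2 * x₂ + 2 * y₂)| |(4 * x₁) + (4 * x₂)| := by
              ring_nf
          _ ≤ _ := this
    · refine ⟨?_, ?_, ?_, ?_⟩
      · intro x y
        exact add_nonneg (le_trans (abs_nonneg _) (le_max_left _ _))
          (le_trans (abs_nonneg _) (le_max_left _ _))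
      · intro x y
        constructor
        · intro h
          have ha : (0:ℚ) ≤ max |x + y| |3 * x + y| :=
            le_trans (abs_nonneg _) (le_max_left _ _)
          have hb : (0:ℚ) ≤ max |x + y| |x - y| :=
            le_trans (abs_nonneg _) (le_max_left _ _)
          have h1 : max |x + y| |3 * x + y| = 0 := by unfold Rnorm at h; linarith
          have h2 : max |x + y| |x - y| = 0 := by unfold Rnorm at h; linarith
          have e1 : |x + y| = 0 := le_antisymm (h1 ▸ le_max_left _ _) (abs_nonneg _)
          have e2 : |x - y| = 0 := le_antisymm (h2 ▸ le_max_right _ _) (abs_nonneg _)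
          rw [abs_eq_zero] at e1 e2
          constructor <;> linarith
        · rintro ⟨rfl, rfl⟩; norm_num [Rnorm]
      · intro q x y
        unfold Rnorm
        rw [show q * x + q * y = q * (x + y) by ring,
          show (3:ℚ) * (q * x) + q * y = q * (3 * x + y) by ring,
          show q * x - q * y = q * (x - y) by ring, abs_mul, abs_mul, abs_mul,
          ← mul_max_of_nonneg _ _ (abs_nonneg q), ← mul_max_of_nonneg _ _ (abs_nonneg q),
          mul_add]
      · intro x₁ y₁ x₂ y₂
        unfold Rnorm
        have h1 := max_abs_add (x₁ + y₁) (3 * x₁ + y₁) (x₂ + y₂) (3 * x₂ + y₂)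
        have h2 := max_abs_add (x₁ + y₁) (x₁ - y₁) (x₂ + y₂) (x₂ - y₂)
        have e1 : x₁ + x₂ + (y₁ + y₂) = (x₁ + y₁) + (x₂ + y₂) := by ring
        have e2 : 3 * (x₁ + x₂) + (y₁ + y₂) = (3 * x₁ + y₁) + (3 * x₂ + y₂) := by ring
        have e3 : x₁ + x₂ - (y₁ + y₂) = (x₁ - y₁) + (x₂ - y₂) := by ring
        rw [e1, e2, e3]
        linarith
end
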